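/- Let n ≥ 1, let γ : ℂ × W × ℂ → W and b : ℂ × W × ℂ → ℝ be ℝ-linear maps with γ₁ = 0 and b₁ = 0 satisfying conditions (C1), (C2), (C3), so that 𝔲 = {X(v) : v ∈ ℂ × W × ℂ} is a real Lie subalgebra of M_{n+2}(ℂ). Then 𝔲 is nilpotent of step at most 3: [𝔲,[𝔲,𝔲]] ⊆ {X(r,0,0) : r ∈ ℂ} and [𝔲,[𝔲,[𝔲,𝔲]]] = 0. -/

import Mathlib

open Matrix

noncomputable section

/-- W = ℂ^{n-1} viewed as a real vector space. -/
abbrev HW (n : ℕ) : Type := Fin (n - 1) → ℂ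

/-- The real inner product ⟨u,v⟩ = Re Σ uᵢ conj(vᵢ). -/
def rInner {n : ℕ} (u v : HW n) : ℝ := (dotProduct u (star v)).re

/-- The symplectic form ω(u,v) = ⟨u, Jv⟩ with J = multiplication by i. -/
def rOmega {n : ℕ} (u v : HW n) : ℝ := rInner u (Complex.I • v)

/-- Extend a vector of ℂ^{n-1} to ℂ^{n+2} supported on the middle indices. -/
def pad (n : ℕ) (u : HW n) : Fin (n + 2) → ℂ := fun j =>
  if h : 0 < (j : ℕ) ∧ (j : ℕ) < n then u ⟨(j : ℕ) - 1, by omega⟩ else 0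

/-- The matrix X(v) ∈ M_{n+2}(ℂ) attached to v = (r,u,s) ∈ ℂ × W × ℂ. -/
def Xmat (n : ℕ) (γ : ℂ × HW n × ℂ →ₗ[ℝ] HW n) (b : ℂ × HW n × ℂ →ₗ[ℝ] ℝ)
    (v : ℂ × HW n × ℂ) : Matrix (Fin (n + 2)) (Fin (n + 2)) ℂ := fun i j =>
  if (i : ℕ) = 0 then
    (if (j : ℕ) = n then Complex.I * ((b v : ℝ) : ℂ)
     else if (j : ℕ) = n + 1 then v.1
     else -((starRingEnd ℂ) (pad n (γ v) j)))
  else if (i : ℕ) = n then (if (j : ℕ) = n + 1 then v.2.2 else 0)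
  else if (i : ℕ) = n + 1 then 0
  else
    (if (j : ℕ) = n then pad n (γ v) i
     else if (j : ℕ) = n + 1 then pad n v.2.1 i
     else 0)

/-- Condition (C1). -/
def Cond1 (n : ℕ) (γ : ℂ × HW n × ℂ →ₗ[ℝ] HW n) : Prop :=
  (∀ u : HW n, γ (0, γ (0, u, 0), 0) = 0) ∧
  (∀ u : HW n, γ (0, Complex.I • γ (0, u, 0), 0) = 0) ∧
  (∀ u u' : HW n, rOmega (γ (0, u, 0)) (γ (0, u', 0)) = 0)

/-- Condition (C2). -/
def Cond2 (n : ℕ) (γ : ℂ × HW n × ℂ →ₗ[ℝ] HW n) : Prop :=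
  ∀ s : ℂ, γ (0, γ (0, 0, Complex.I * s) - Complex.I • γ (0, 0, s), 0) = 0

/-- Condition (C3). -/
def Cond3 (n : ℕ) (γ : ℂ × HW n × ℂ →ₗ[ℝ] HW n)
    (b : ℂ × HW n × ℂ →ₗ[ℝ] ℝ) : Prop :=
  (∀ (u : HW n) (s : ℂ),
    b (0, s • γ (0, u, 0), 0) = 2 * rOmega (γ (0, u, 0)) (γ (0, 0, s))) ∧
  (∀ s : ℂ,
    b (0, γ (0, 0, Complex.I * s) - Complex.I • γ (0, 0, s), 0) =
      2 * rOmega (γ (0, 0, Complex.I * s)) (γ (0, 0, s)))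

/-- [𝔲,𝔲]: the real span of commutators of elements of 𝔲. -/
def Xc2 (n : ℕ) (γ : ℂ × HW n × ℂ →ₗ[ℝ] HW n) (b : ℂ × HW n × ℂ →ₗ[ℝ] ℝ) :
    Submodule ℝ (Matrix (Fin (n + 2)) (Fin (n + 2)) ℂ) :=
  Submodule.span ℝ {m | ∃ v v' : ℂ × HW n × ℂ,
    m = Xmat n γ b v * Xmat n γ b v' - Xmat n γ b v' * Xmat n γ b v}

/-- [𝔲,[𝔲,𝔲]]. -/
def Xc3 (n : ℕ) (γ : ℂ × HW n × ℂ →ₗ[ℝ] HW n) (b : ℂ × HW n × ℂ →ₗ[ℝ] ℝ) :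
    Submodule ℝ (Matrix (Fin (n + 2)) (Fin (n + 2)) ℂ) :=
  Submodule.span ℝ {m | ∃ v : ℂ × HW n × ℂ, ∃ w ∈ Xc2 n γ b,
    m = Xmat n γ b v * w - w * Xmat n γ b v}

/-- [𝔲,[𝔲,[𝔲,𝔲]]]. -/
def Xc4 (n : ℕ) (γ : ℂ × HW n × ℂ →ₗ[ℝ] HW n) (b : ℂ × HW n × ℂ →ₗ[ℝ] ℝ) :
    Submodule ℝ (Matrix (Fin (n + 2)) (Fin (n + 2)) ℂ) :=
  Submodule.span ℝ {m | ∃ v : ℂ × HW n × ℂ, ∃ w ∈ Xc3 n γ b,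
    m = Xmat n γ b v * w - w * Xmat n γ b v}

/-! The matrices X(v) are strictly block upper triangular for the four blocks of sizes
1, n − 1, 1, 1: giving the blocks the levels 0, 1, 2, 3, every X(v) raises the level by at
least one, and a product of such matrices raises it by at least the sum. Hence elements of
[𝔲,[𝔲,𝔲]] raise the level by three, so they live in the corner entry (0, n + 1), which is
exactly the shape of X(r,0,0) once γ₁ = 0 and b₁ = 0; and elements of [𝔲,[𝔲,[𝔲,𝔲]]] raise
it by four, so they vanish. -/

namespace Matrix

variable {ι α : Type*} (R : Type*) [Semiring R]

def levelRaising [AddCommMonoid α] [Module R α] (ℓ : ι → ℕ) (k : ℕ) :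
    Submodule R (Matrix ι ι α) where
  carrier := {M | ∀ i j, ℓ j < ℓ i + k → M i j = 0}
  add_mem' hA hB i j h := by rw [add_apply, hA i j h, hB i j h, add_zero]
  zero_mem' _ _ _ := rfl
  smul_mem' c M hM i j h := by rw [smul_apply, hM i j h, smul_zero]

variable {R} {ℓ : ι → ℕ} {k a b : ℕ}

section Mul

variable [Fintype ι]

theorem mul_mem_levelRaising [NonUnitalNonAssocSemiring α] [Module R α] {A B : Matrix ι ι α}
    (hA : A ∈ levelRaising R ℓ a) (hB : B ∈ levelRaising R ℓ b) :
    A * B ∈ levelRaising R ℓ (a + b) := by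
  intro i j h
  rw [mul_apply]
  refine Finset.sum_eq_zero fun k _ => ?_
  by_cases hk : ℓ k < ℓ i + a
  · rw [hA i k hk, zero_mul]
  · rw [hB k j (by omega), mul_zero]

theorem commutator_mem_levelRaising [NonUnitalNonAssocRing α] [Module R α]
    {A B : Matrix ι ι α} (hA : A ∈ levelRaising R ℓ a)
    (hB : B ∈ levelRaising R ℓ b) : A * B - B * A ∈ levelRaising R ℓ (a + b) :=
  fun i j h => by
    rw [sub_apply, mul_mem_levelRaising hA hB i j h,
      mul_mem_levelRaising hB hA i j (by omega), sub_zero]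

end Mul

theorem eq_zero_of_mem_levelRaising [AddCommMonoid α] [Module R α] {M : Matrix ι ι α} (hM : M ∈ levelRaising R ℓ k) (hℓ : ∀ i, ℓ i < k) : M = 0 :=
  ext fun i j => hM i j (by have := hℓ j; omega)

theorem eq_single_of_mem_levelRaising [DecidableEq ι] [AddCommMonoid α] [Module R α]
    {M : Matrix ι ι α} (hM : M ∈ levelRaising R ℓ k) {i₀ j₀ : ι}
    (hℓ : ∀ i j, ℓ i + k ≤ ℓ j → i = i₀ ∧ j = j₀) : M = single i₀ j₀ (M i₀ j₀) := by
  ext i j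
  by_cases hij : i = i₀ ∧ j = j₀
  · obtain ⟨rfl, rfl⟩ := hij
    rw [single_apply_same]
  · rw [single_apply_of_ne i₀ j₀ _ i j fun h => hij ⟨h.1.symm, h.2.symm⟩]
    exact hM i j (lt_of_not_ge fun h => hij (hℓ i j h))

end Matrix

open Matrix

def blockLevel (n : ℕ) (i : Fin (n + 2)) : ℕ :=
  if (i : ℕ) = 0 then 0 else if (i : ℕ) < n then 1 else if (i : ℕ) = n then 2 else 3

theorem blockLevel_lt_four (n : ℕ) (i : Fin (n + 2)) : blockLevel n i < 4 := by
  unfold blockLevel; split_ifs <;> omega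

theorem eq_corner_of_blockLevel_add_three_le {n : ℕ} {i j : Fin (n + 2)}
    (h : blockLevel n i + 3 ≤ blockLevel n j) : i = 0 ∧ j = Fin.last (n + 1) := by
  have hj := j.isLt
  unfold blockLevel at h
  constructor <;> ext <;> simp only [Fin.val_zero, Fin.val_last] <;> split_ifs at h <;> omega

section

variable {n : ℕ} {γ : ℂ × HW n × ℂ →ₗ[ℝ] HW n} {b : ℂ × HW n × ℂ →ₗ[ℝ] ℝ}

theorem Xmat_mem_levelRaising (hn : 1 ≤ n) (v : ℂ × HW n × ℂ) :
    Xmat n γ b v ∈ levelRaising ℝ (blockLevel n) 1 := by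
  intro i j h
  have hj := j.isLt
  unfold blockLevel at h
  unfold Xmat pad
  split_ifs at h ⊢ <;> first | rfl | omega | simp

theorem Xc2_le_levelRaising (hn : 1 ≤ n) : Xc2 n γ b ≤ levelRaising ℝ (blockLevel n) 2 := by
  refine Submodule.span_le.2 ?_
  rintro _ ⟨v, v', rfl⟩
  exact commutator_mem_levelRaising (Xmat_mem_levelRaising hn v) (Xmat_mem_levelRaising hn v')

theorem Xc3_le_levelRaising (hn : 1 ≤ n) : Xc3 n γ b ≤ levelRaising ℝ (blockLevel n) 3 := by
  refine Submodule.span_le.2 ?_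
  rintro _ ⟨v, w, hw, rfl⟩
  exact commutator_mem_levelRaising (Xmat_mem_levelRaising hn v) (Xc2_le_levelRaising hn hw)

theorem Xc4_le_levelRaising (hn : 1 ≤ n) : Xc4 n γ b ≤ levelRaising ℝ (blockLevel n) 4 := by
  refine Submodule.span_le.2 ?_
  rintro _ ⟨v, w, hw, rfl⟩
  exact commutator_mem_levelRaising (Xmat_mem_levelRaising hn v) (Xc3_le_levelRaising hn hw)

theorem Xmat_eq_single (hγ1 : ∀ r : ℂ, γ (r, 0, 0) = 0) (hb1 : ∀ r : ℂ, b (r, 0, 0) = 0)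
    (r : ℂ) : Xmat n γ b (r, 0, 0) = single 0 (Fin.last (n + 1)) r := by
  ext i j
  have hj := j.isLt
  simp only [Xmat, hγ1, hb1, pad, single, of_apply, Fin.ext_iff, Fin.val_zero,
    Fin.val_last]
  split_ifs <;> first | rfl | omega | simp

end

theorem lie_algebra_three_step_nilpotent_general (n : ℕ) (hn : 1 ≤ n)
    (γ : ℂ × HW n × ℂ →ₗ[ℝ] HW n) (b : ℂ × HW n × ℂ →ₗ[ℝ] ℝ)
    (hγ1 : ∀ r : ℂ, γ (r, 0, 0) = 0) (hb1 : ∀ r : ℂ, b (r, 0, 0) = 0) :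
    ((Xc3 n γ b : Set (Matrix (Fin (n + 2)) (Fin (n + 2)) ℂ)) ⊆
        {m | ∃ r : ℂ, m = Xmat n γ b (r, 0, 0)}) ∧
      Xc4 n γ b = ⊥ := by
  refine ⟨fun m hm => ⟨m 0 (Fin.last (n + 1)), ?_⟩, eq_bot_iff.2 fun m hm => ?_⟩
  · rw [Xmat_eq_single hγ1 hb1]
    exact eq_single_of_mem_levelRaising (Xc3_le_levelRaising hn hm)
      fun _ _ => eq_corner_of_blockLevel_add_three_le
  · exact eq_zero_of_mem_levelRaising (Xc4_le_levelRaising hn hm) (blockLevel_lt_four n)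

/-- the Lie algebra 𝔲 is nilpotent of step at most 3:
[𝔲,[𝔲,𝔲]] ⊆ {X(r,0,0) : r ∈ ℂ} and [𝔲,[𝔲,[𝔲,𝔲]]] = 0. -/
theorem lie_algebra_three_step_nilpotent (n : ℕ) (hn : 1 ≤ n)
    (γ : ℂ × HW n × ℂ →ₗ[ℝ] HW n) (b : ℂ × HW n × ℂ →ₗ[ℝ] ℝ)
    (hγ1 : ∀ r : ℂ, γ (r, 0, 0) = 0) (hb1 : ∀ r : ℂ, b (r, 0, 0) = 0)
    (hC1 : Cond1 n γ) (hC2 : Cond2 n γ) (hC3 : Cond3 n γ b) :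
    ((Xc3 n γ b : Set (Matrix (Fin (n + 2)) (Fin (n + 2)) ℂ)) ⊆
        {m | ∃ r : ℂ, m = Xmat n γ b (r, 0, 0)}) ∧
      Xc4 n γ b = ⊥ :=
  lie_algebra_three_step_nilpotent_general n hn γ b hγ1 hb1
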